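/- arXiv:2105.11992 — 2 statements merged into one kernel-verified Lean document; each statement's English description precedes it below -/
import Mathlib

section
/- Let S be a finite set, x : S → [0,1], p_S(A) = ∏_{i∈A} x_i · ∏_{i∈S\A} (1−x_i), h_S^k(x) = ∑_{A⊆S,|A|=k} p_S(A)·(k − x(A)), and Q_S^i(x) = ∑_{A⊆S,|A|=i} p_S(A). Then for 0 ≤ k ≤ |S|, h_S^k(x) = ∑_{i=0}^{k−1} Q_S^i(x)·(x(S) − i). -/
/-!
Split `k + 1 - x(B) = ∑_{i ∈ B} (1 - x_i)`. Since `p_S(B) (1 - x_i) = p_S(B \ {i}) x_i` for `i ∈ B`,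
double counting the pairs `A ⊂ B = A ∪ {i}` turns `h_S^{k+1}` into
`∑_{|A| = k} p_S(A) (x(S) - x(A)) = h_S^k + Q_S^k (x(S) - k)`;
the formula follows by induction on `k`.
-/

open Finset

section

variable {ι M R : Type*} [DecidableEq ι]

theorem Finset.sum_powersetCard_succ_sum_erase [AddCommMonoid M] (S : Finset ι) (k : ℕ)
    (f : Finset ι → ι → M) :
    ∑ B ∈ S.powersetCard (k + 1), ∑ i ∈ B, f (B.erase i) i =
      ∑ A ∈ S.powersetCard k, ∑ i ∈ S \ A, f A i := by
  rw [sum_sigma', sum_sigma']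
  refine sum_nbij' (fun p ↦ ⟨p.1.erase p.2, p.2⟩) (fun p ↦ ⟨insert p.2 p.1, p.2⟩)
    ?_ ?_ ?_ ?_ (fun _ _ ↦ rfl)
  · rintro ⟨B, i⟩ hBi
    simp only [mem_sigma, mem_powersetCard] at hBi ⊢
    obtain ⟨⟨hBS, hBcard⟩, hiB⟩ := hBi
    refine ⟨⟨(erase_subset _ _).trans hBS, by rw [card_erase_of_mem hiB, hBcard]; rfl⟩, ?_⟩
    simp [hBS hiB]
  · rintro ⟨A, i⟩ hAi
    simp only [mem_sigma, mem_powersetCard, mem_sdiff] at hAi ⊢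
    obtain ⟨⟨hAS, hAcard⟩, hiS, hiA⟩ := hAi
    exact ⟨⟨insert_subset hiS hAS, by rw [card_insert_of_notMem hiA, hAcard]⟩, mem_insert_self _ _⟩
  · rintro ⟨B, i⟩ hBi
    simp only [mem_sigma] at hBi
    simp [insert_erase hBi.2]
  · rintro ⟨A, i⟩ hAi
    simp only [mem_sigma, mem_sdiff] at hAi
    simp [erase_insert hAi.2.2]

section CommRing

variable [CommRing R]

/-- The probability `p_S(A)` that the random set containing each `i ∈ S` independently with
probability `x i` is exactly `A`. -/
def subsetWeight (S : Finset ι) (x : ι → R) (A : Finset ι) : R :=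
  (∏ i ∈ A, x i) * ∏ i ∈ S \ A, (1 - x i)

theorem subsetWeight_mul_one_sub {S B : Finset ι} (x : ι → R) {i : ι} (hBS : B ⊆ S)
    (hiB : i ∈ B) :
    subsetWeight S x B * (1 - x i) = subsetWeight S x (B.erase i) * x i := by
  have hiS : i ∉ S \ B := fun h ↦ (mem_sdiff.1 h).2 hiB
  rw [subsetWeight, subsetWeight, ← mul_prod_erase B x hiB, sdiff_erase (hBS hiB),
    prod_insert hiS]
  ring

theorem sum_powersetCard_succ_subsetWeight_mul (S : Finset ι) (x : ι → R) (k : ℕ) :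
    ∑ B ∈ S.powersetCard (k + 1), subsetWeight S x B * ((k + 1 : R) - ∑ i ∈ B, x i) =
      ∑ A ∈ S.powersetCard k, subsetWeight S x A * ((k : R) - ∑ i ∈ A, x i) +
        (∑ A ∈ S.powersetCard k, subsetWeight S x A) * ((∑ i ∈ S, x i) - k) := by
  calc ∑ B ∈ S.powersetCard (k + 1), subsetWeight S x B * ((k + 1 : R) - ∑ i ∈ B, x i)
      = ∑ B ∈ S.powersetCard (k + 1), ∑ i ∈ B, subsetWeight S x (B.erase i) * x i := by
        refine sum_congr rfl fun B hB ↦ ?_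
        obtain ⟨hBS, hBcard⟩ := mem_powersetCard.1 hB
        have hsplit : (k + 1 : R) - ∑ i ∈ B, x i = ∑ i ∈ B, (1 - x i) := by
          rw [sum_sub_distrib, sum_const, hBcard, nsmul_one, Nat.cast_succ]
        rw [hsplit, mul_sum]
        exact sum_congr rfl fun i hi ↦ subsetWeight_mul_one_sub x hBS hi
    _ = ∑ A ∈ S.powersetCard k, ∑ i ∈ S \ A, subsetWeight S x A * x i :=
        sum_powersetCard_succ_sum_erase S k fun A i ↦ subsetWeight S x A * x i
    _ = ∑ A ∈ S.powersetCard k, subsetWeight S x A * ((∑ i ∈ S, x i) - ∑ i ∈ A, x i) :=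
        sum_congr rfl fun A hA ↦ by
          rw [← mul_sum, sum_sdiff_eq_sub (mem_powersetCard.1 hA).1]
    _ = _ := by
        rw [sum_mul, ← sum_add_distrib]
        exact sum_congr rfl fun A _ ↦ by ring

end CommRing

end

theorem stmt10_general {ι : Type*} [DecidableEq ι] (S : Finset ι) (x : ι → ℝ)
    (k : ℕ) :
    ∑ A ∈ S.powersetCard k,
        (∏ i ∈ A, x i) * (∏ i ∈ S \ A, (1 - x i)) * ((k:ℝ) - ∑ i ∈ A, x i)
    = ∑ i ∈ Finset.range k,
        (∑ A ∈ S.powersetCard i, (∏ j ∈ A, x j) * (∏ j ∈ S \ A, (1 - x j)))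
          * ((∑ j ∈ S, x j) - (i:ℝ)) := by
  induction k with
  | zero => simp
  | succ k ih =>
    rw [sum_range_succ, ← ih, Nat.cast_succ]
    exact sum_powersetCard_succ_subsetWeight_mul S x k

theorem stmt10 {ι : Type*} [DecidableEq ι] (S : Finset ι) (x : ι → ℝ)
    (hx : ∀ i ∈ S, x i ∈ Set.Icc (0:ℝ) 1) (k : ℕ) (hk : k ≤ S.card) :
    ∑ A ∈ S.powersetCard k,
        (∏ i ∈ A, x i) * (∏ i ∈ S \ A, (1 - x i)) * ((k:ℝ) - ∑ i ∈ A, x i)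
    = ∑ i ∈ Finset.range k,
        (∑ A ∈ S.powersetCard i, (∏ j ∈ A, x j) * (∏ j ∈ S \ A, (1 - x j)))
          * ((∑ j ∈ S, x j) - (i:ℝ)) :=
  stmt10_general S x k
end

section
/- Let S be a finite set with |S| = n−1 and 1 ≤ k ≤ n−1. For every i ∈ S and x ∈ [0,1]^S, the partial derivative of h_S^k with respect to x_i equals Q_{S\{i\}}^{k−1}(x) · (k − x(S) − x_i), where Q_T^j(x) = ∑_{A⊆T,|A|=j} p_T(A). -/
/-!
Write `S = insert i T`. Splitting the `k`-subsets of `S` according to whether they contain `i`,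
`h_S^k = (1 - x_i) h_T^k + x_i ∑_{|B| = k-1} p_T(B) (k - x_i - x(B))`. Double counting the pairs
`(B, j)` with `j ∈ T \ B` through `p_T(B) x_j = p_T(B ∪ {j}) (1 - x_j)` gives
`h_T^k = ∑_{|B| = k-1} p_T(B) (x(T) - x(B))`. Hence, as a function of `x_i`, `h_S^k` is the
quadratic `Q_T^{k-1} (x(T) + x_i (k - x(T) - x_i))` minus a constant, whose derivative is
`Q_T^{k-1} (k - x(S) - x_i)`.
-/

open Finset Function

section

variable {ι : Type*} [DecidableEq ι]

section DoubleCounting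

variable {β : Type*} [AddCommMonoid β]

theorem sum_powersetCard_succ_insert {i : ι} {T : Finset ι} (hi : i ∉ T) (m : ℕ)
    (f : Finset ι → β) :
    ∑ A ∈ (insert i T).powersetCard (m + 1), f A =
      ∑ A ∈ T.powersetCard (m + 1), f A + ∑ B ∈ T.powersetCard m, f (insert i B) := by
  rw [powersetCard_succ_insert hi, sum_union, sum_image]
  · exact insert_erase_invOn.2.injOn.mono fun B hB => notMem_mono (mem_powersetCard.1 hB).1 hi
  · refine disjoint_left.2 fun A hA hA' => ?_
    obtain ⟨B, -, rfl⟩ := mem_image.1 hA'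
    exact hi ((mem_powersetCard.1 hA).1 (mem_insert_self i B))

theorem sum_powersetCard_sum_sdiff_insert (T : Finset ι) (m : ℕ) (f : Finset ι → ι → β) :
    ∑ B ∈ T.powersetCard m, ∑ j ∈ T \ B, f (insert j B) j =
      ∑ A ∈ T.powersetCard (m + 1), ∑ j ∈ A, f A j := by
  rw [sum_sigma', sum_sigma']
  refine sum_bij' (fun p _ => ⟨insert p.2 p.1, p.2⟩) (fun p _ => ⟨p.1.erase p.2, p.2⟩)
    ?_ ?_ ?_ ?_ fun _ _ => rfl
  · rintro ⟨B, j⟩ h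
    simp only [mem_sigma, mem_powersetCard, mem_sdiff] at h ⊢
    obtain ⟨⟨hBT, rfl⟩, hjT, hjB⟩ := h
    exact ⟨⟨insert_subset hjT hBT, card_insert_of_notMem hjB⟩, mem_insert_self j B⟩
  · rintro ⟨A, j⟩ h
    simp only [mem_sigma, mem_powersetCard, mem_sdiff] at h ⊢
    obtain ⟨⟨hAT, hcard⟩, hjA⟩ := h
    refine ⟨⟨(erase_subset j A).trans hAT, ?_⟩, hAT hjA, notMem_erase j A⟩
    rw [card_erase_of_mem hjA, hcard, Nat.add_sub_cancel]
  · rintro ⟨B, j⟩ h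
    simp only [mem_sigma, mem_sdiff] at h
    simp [erase_insert h.2.2]
  · rintro ⟨A, j⟩ h
    simp only [mem_sigma] at h
    simp [insert_erase h.2]

end DoubleCounting

-- `p_T(A)`, `Q_T^k` and `h_T^k` in the notation of the paper.
def subsetProb (x : ι → ℝ) (T A : Finset ι) : ℝ :=
  (∏ j ∈ A, x j) * ∏ j ∈ T \ A, (1 - x j)

def levelProb (x : ι → ℝ) (T : Finset ι) (k : ℕ) : ℝ :=
  ∑ A ∈ T.powersetCard k, subsetProb x T A

def levelDeficit (x : ι → ℝ) (T : Finset ι) (k : ℕ) : ℝ :=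
  ∑ A ∈ T.powersetCard k, subsetProb x T A * (k - ∑ j ∈ A, x j)

theorem subsetProb_mul_of_mem_sdiff (x : ι → ℝ) {T B : Finset ι} {j : ι} (hj : j ∈ T \ B) :
    subsetProb x T B * x j = subsetProb x T (insert j B) * (1 - x j) := by
  have hjB : j ∉ B := (mem_sdiff.1 hj).2
  rw [subsetProb, subsetProb, ← insert_erase hj, sdiff_insert, prod_insert (notMem_erase j _),
    prod_insert hjB]
  ring

theorem levelDeficit_succ (x : ι → ℝ) (T : Finset ι) (m : ℕ) :
    levelDeficit x T (m + 1) =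
      ∑ B ∈ T.powersetCard m, subsetProb x T B * (∑ j ∈ T, x j - ∑ j ∈ B, x j) := by
  calc levelDeficit x T (m + 1)
      = ∑ A ∈ T.powersetCard (m + 1), ∑ j ∈ A, subsetProb x T A * (1 - x j) := by
        refine sum_congr rfl fun A hA => ?_
        rw [← mul_sum, sum_sub_distrib, sum_const, (mem_powersetCard.1 hA).2, nsmul_one]
    _ = ∑ B ∈ T.powersetCard m, ∑ j ∈ T \ B, subsetProb x T (insert j B) * (1 - x j) :=
        (sum_powersetCard_sum_sdiff_insert T m _).symm
    _ = ∑ B ∈ T.powersetCard m, ∑ j ∈ T \ B, subsetProb x T B * x j :=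
        sum_congr rfl fun B _ => sum_congr rfl fun j hj => (subsetProb_mul_of_mem_sdiff x hj).symm
    _ = _ := sum_congr rfl fun B hB => by rw [← mul_sum, sum_sdiff_eq_sub (mem_powersetCard.1 hB).1]

section Update

variable {i : ι} {T : Finset ι} (x : ι → ℝ) (t : ℝ)

theorem prod_one_sub_update_of_notMem {s : Finset ι} (hi : i ∉ s) :
    ∏ j ∈ s, (1 - update x i t j) = ∏ j ∈ s, (1 - x j) :=
  prod_congr rfl fun j hj => by rw [update_of_ne (ne_of_mem_of_not_mem hj hi)]

theorem subsetProb_update_insert_of_subset (hi : i ∉ T) {A : Finset ι} (hA : A ⊆ T) :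
    subsetProb (update x i t) (insert i T) A = (1 - t) * subsetProb x T A := by
  have hiA : i ∉ A := fun h => hi (hA h)
  have hiTA : i ∉ T \ A := fun h => hi (mem_sdiff.1 h).1
  rw [subsetProb, subsetProb, insert_sdiff_of_notMem _ hiA, prod_insert hiTA, update_self,
    prod_update_of_notMem hiA, prod_one_sub_update_of_notMem x t hiTA]
  ring

theorem subsetProb_update_insert_insert (hi : i ∉ T) {B : Finset ι} (hB : B ⊆ T) :
    subsetProb (update x i t) (insert i T) (insert i B) = t * subsetProb x T B := by
  have hiB : i ∉ B := fun h => hi (hB h)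
  have hiTB : i ∉ T \ B := fun h => hi (mem_sdiff.1 h).1
  rw [subsetProb, subsetProb, insert_sdiff_insert, sdiff_insert_of_notMem hi, prod_insert hiB,
    update_self, prod_update_of_notMem hiB, prod_one_sub_update_of_notMem x t hiTB]
  ring

theorem levelDeficit_update_insert (hi : i ∉ T) (m : ℕ) :
    levelDeficit (update x i t) (insert i T) (m + 1) =
      levelProb x T m * (∑ j ∈ T, x j + t * (m + 1 - ∑ j ∈ T, x j - t)) -
        ∑ B ∈ T.powersetCard m, subsetProb x T B * ∑ j ∈ B, x j := by
  have hwithout : ∀ A ∈ T.powersetCard (m + 1),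
      subsetProb (update x i t) (insert i T) A * ((m + 1 : ℕ) - ∑ j ∈ A, update x i t j) =
        (1 - t) * (subsetProb x T A * ((m + 1 : ℕ) - ∑ j ∈ A, x j)) := by
    intro A hA
    have hAT := (mem_powersetCard.1 hA).1
    rw [subsetProb_update_insert_of_subset x t hi hAT, sum_update_of_notMem fun h => hi (hAT h)]
    ring
  have hwith : ∀ B ∈ T.powersetCard m,
      subsetProb (update x i t) (insert i T) (insert i B) *
          ((m + 1 : ℕ) - ∑ j ∈ insert i B, update x i t j) =
        t * (subsetProb x T B * (m + 1 - t - ∑ j ∈ B, x j)) := by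
    intro B hB
    have hBT := (mem_powersetCard.1 hB).1
    rw [subsetProb_update_insert_insert x t hi hBT, sum_insert fun h => hi (hBT h), update_self,
      sum_update_of_notMem fun h => hi (hBT h)]
    push_cast
    ring
  rw [levelDeficit, sum_powersetCard_succ_insert hi, sum_congr rfl hwithout, sum_congr rfl hwith,
    ← mul_sum, ← levelDeficit, levelDeficit_succ, ← mul_sum, levelProb, sum_mul, mul_sum, mul_sum,
    ← sum_sub_distrib, ← sum_add_distrib]
  refine sum_congr rfl fun B _ => ?_
  ring

end Update

end

theorem stmt15_general {ι : Type*} [DecidableEq ι] (S : Finset ι) (k : ℕ)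
    (hk1 : 1 ≤ k)
    (i : ι) (hi : i ∈ S) (x : ι → ℝ) :
    HasDerivAt (fun t : ℝ =>
      ∑ A ∈ S.powersetCard k,
        (∏ j ∈ A, Function.update x i t j)
          * (∏ j ∈ S \ A, (1 - Function.update x i t j))
          * ((k:ℝ) - ∑ j ∈ A, Function.update x i t j))
      ((∑ A ∈ (S.erase i).powersetCard (k-1),
          (∏ j ∈ A, x j) * (∏ j ∈ (S.erase i) \ A, (1 - x j)))
        * ((k:ℝ) - (∑ j ∈ S, x j) - x i))
      (x i) := by
  obtain ⟨m, rfl⟩ : ∃ m, k = m + 1 := ⟨k - 1, by omega⟩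
  set T := S.erase i
  have hiT : i ∉ T := notMem_erase i S
  change HasDerivAt (fun t => levelDeficit (update x i t) S (m + 1))
    (levelProb x T m * ((m + 1 : ℕ) - ∑ j ∈ S, x j - x i)) (x i)
  have hquad := ((((hasDerivAt_id' (x i)).fun_mul ((hasDerivAt_id' (x i)).const_sub
    ((m : ℝ) + 1 - ∑ j ∈ T, x j))).const_add (∑ j ∈ T, x j)).const_mul (levelProb x T m)).sub_const
    (∑ B ∈ T.powersetCard m, subsetProb x T B * ∑ j ∈ B, x j)
  refine (hquad.congr_deriv ?_).congr_of_eventuallyEq (.of_forall fun t => ?_)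
  · rw [← sum_erase_add S x hi]
    push_cast
    ring
  · dsimp only
    rw [← levelDeficit_update_insert x t hiT m, insert_erase hi]

theorem stmt15 {ι : Type*} [DecidableEq ι] (S : Finset ι) (n k : ℕ)
    (hS : S.card = n - 1) (hk1 : 1 ≤ k) (hk2 : k ≤ n - 1)
    (i : ι) (hi : i ∈ S) (x : ι → ℝ) (hx : ∀ j ∈ S, x j ∈ Set.Icc (0:ℝ) 1) :
    HasDerivAt (fun t : ℝ =>
      ∑ A ∈ S.powersetCard k,
        (∏ j ∈ A, Function.update x i t j)
          * (∏ j ∈ S \ A, (1 - Function.update x i t j))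
          * ((k:ℝ) - ∑ j ∈ A, Function.update x i t j))
      ((∑ A ∈ (S.erase i).powersetCard (k-1),
          (∏ j ∈ A, x j) * (∏ j ∈ (S.erase i) \ A, (1 - x j)))
        * ((k:ℝ) - (∑ j ∈ S, x j) - x i))
      (x i) :=
  stmt15_general S k hk1 i hi x
end
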